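/- arXiv:1905.00536 — 2 statements merged into one kernel-verified Lean document; each statement's English description precedes it below -/
import Mathlib

section
/- Let G = (V, E) be a finite, undirected, connected simple graph with positive edge weights, let T_ℓ ⊆ … ⊆ T_1 ⊆ V be nested terminal sets, let t ≥ 1, and use the linear level-cost function g(i) = i. Set MIN_i := OPT_t(G, T_i) and assume Σ_{i=1}^{ℓ} MIN_i > 0. Let Q = {i_1 < … < i_m} ⊆ {1,…,ℓ} with i_1 = 1, and let the merged solution be E_i := ⋃_{k ≥ κ(i)} H_k where κ(i) = max{ k : i_k ≤ i } and each H_k is a minimum-weight subsetwise t-spanner of G over T_{i_k}. Then the cost of the merged solution satisfies cost ≤ ( Σ_{k=1}^{m} (i_{k+1} − 1)·MIN_{i_k} / Σ_{i=1}^{ℓ} MIN_i ) · OPT_ML, with the convention i_{m+1} = ℓ + 1. -/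
open SimpleGraph Finset

variable {V : Type*}

/-- Total weight of a walk: sum of its edge weights. -/
def walkWeight (w : Sym2 V → ℝ) {G : SimpleGraph V} {u v : V} (p : G.Walk u v) : ℝ :=
  (p.edges.map w).sum

/-- Total weight of a finite edge set. -/
def setWeight (w : Sym2 V → ℝ) (E' : Finset (Sym2 V)) : ℝ :=
  ∑ e ∈ E', w e

/-- Shortest-walk distance in `G` between `u` and `v`. -/
noncomputable def graphDist (G : SimpleGraph V) (w : Sym2 V → ℝ) (u v : V) : ℝ :=
  sInf {c : ℝ | ∃ p : G.Walk u v, walkWeight w p = c}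

/-- `E'` is a subsetwise `f`-spanner of `G` over `T`:  `E' ⊆ E(G)` and for all terminals
`u, v ∈ T` there is a walk from `u` to `v` using only edges of `E'` of total weight at most
`f (d_G(u,v))` (equivalently, `d_{E'}(u,v) ≤ f (d_G(u,v))`). -/
def IsSpanner (G : SimpleGraph V) (w : Sym2 V → ℝ) (T : Set V) (f : ℝ → ℝ)
    (E' : Finset (Sym2 V)) : Prop :=
  ↑E' ⊆ G.edgeSet ∧
    ∀ u ∈ T, ∀ v ∈ T, ∃ p : G.Walk u v,
      (∀ e ∈ p.edges, e ∈ E') ∧ walkWeight w p ≤ f (graphDist G w u v)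

/-- A distortion function: `f(x) ≥ x` for all `x ≥ 0`. -/
def IsDistortion (f : ℝ → ℝ) : Prop := ∀ x : ℝ, 0 ≤ x → x ≤ f x

/-- Steiner tree weight: minimum weight of an edge set `E' ⊆ E(G)` connecting all of `T`. -/
noncomputable def steinerWeight (G : SimpleGraph V) (w : Sym2 V → ℝ) (T : Set V) : ℝ :=
  sInf {c : ℝ | ∃ E' : Finset (Sym2 V), ↑E' ⊆ G.edgeSet ∧
    (∀ u ∈ T, ∀ v ∈ T, ∃ p : G.Walk u v, ∀ e ∈ p.edges, e ∈ E') ∧ setWeight w E' = c}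

/-- Minimum weight of a subsetwise `f`-spanner of `G` over `T`. -/
noncomputable def optSpanner (G : SimpleGraph V) (w : Sym2 V → ℝ) (T : Set V) (f : ℝ → ℝ) : ℝ :=
  sInf {c : ℝ | ∃ E' : Finset (Sym2 V), IsSpanner G w T f E' ∧ setWeight w E' = c}

/-- `E'` is a subsetwise multiplicative `t`-spanner of `G` over `T`. -/
def IsSpannerMul (G : SimpleGraph V) (w : Sym2 V → ℝ) (T : Set V) (t : ℝ)
    (E' : Finset (Sym2 V)) : Prop :=
  IsSpanner G w T (fun x => t * x) E'

/-- `OPT_t(G,T)`: minimum weight of a subsetwise multiplicative `t`-spanner. -/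
noncomputable def optT (G : SimpleGraph V) (w : Sym2 V → ℝ) (t : ℝ) (T : Set V) : ℝ :=
  sInf {c : ℝ | ∃ E' : Finset (Sym2 V), IsSpannerMul G w T t E' ∧ setWeight w E' = c}

/-- Cost of a multi-level solution `F` with level-cost function `g`:
`Σ_{e ∈ F 1} g(y(e))·w(e)` where `y(e) = max { i ∈ {1,…,ℓ} : e ∈ F i }`. -/
noncomputable def mlCost [DecidableEq V] (w : Sym2 V → ℝ) (g : ℕ → ℝ) (ℓ : ℕ)
    (F : ℕ → Finset (Sym2 V)) : ℝ :=
  ∑ e ∈ F 1, g (((Finset.Icc 1 ℓ).filter (fun i => e ∈ F i)).sup id) * w e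

/-- `F` is a multi-level subsetwise `t`-spanner: a nested sequence `F ℓ ⊆ … ⊆ F 1 ⊆ E` where
each `F i` is a subsetwise `t`-spanner of `G` over `T i`. -/
def IsMLSpanner (G : SimpleGraph V) (w : Sym2 V → ℝ) (t : ℝ) (ℓ : ℕ)
    (T : ℕ → Finset V) (F : ℕ → Finset (Sym2 V)) : Prop :=
  (∀ i ∈ Finset.Icc 1 ℓ, IsSpannerMul G w ↑(T i) t (F i)) ∧
  (∀ i ∈ Finset.Icc 1 ℓ, ∀ j ∈ Finset.Icc 1 ℓ, i ≤ j → F j ⊆ F i)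

/-- `OPT_ML`: minimum cost of a multi-level subsetwise `t`-spanner. -/
noncomputable def optML [DecidableEq V] (G : SimpleGraph V) (w : Sym2 V → ℝ) (t : ℝ)
    (g : ℕ → ℝ) (ℓ : ℕ) (T : ℕ → Finset V) : ℝ :=
  sInf {c : ℝ | ∃ F : ℕ → Finset (Sym2 V), IsMLSpanner G w t ℓ T F ∧ mlCost w g ℓ F = c}


lemma optT_bddBelow {V : Type*} (G : SimpleGraph V) (w : Sym2 V → ℝ)
    (hw : ∀ e ∈ G.edgeSet, 0 < w e) (t : ℝ) (T : Set V) :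
    ∀ c ∈ {c : ℝ | ∃ E' : Finset (Sym2 V), IsSpannerMul G w T t E' ∧ setWeight w E' = c},
      (0:ℝ) ≤ c := by
  rintro c ⟨E', hsp, rfl⟩
  exact Finset.sum_nonneg fun e he => (hw e (hsp.1 he)).le

lemma optT_nonneg {V : Type*} (G : SimpleGraph V) (w : Sym2 V → ℝ)
    (hw : ∀ e ∈ G.edgeSet, 0 < w e) (t : ℝ) (T : Set V) :
    0 ≤ optT G w t T :=
  Real.sInf_nonneg (optT_bddBelow G w hw t T)

lemma optT_le_setWeight {V : Type*} (G : SimpleGraph V) (w : Sym2 V → ℝ)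
    (hw : ∀ e ∈ G.edgeSet, 0 < w e) (t : ℝ) (T : Set V) (E' : Finset (Sym2 V))
    (h : IsSpannerMul G w T t E') : optT G w t T ≤ setWeight w E' :=
  csInf_le ⟨0, optT_bddBelow G w hw t T⟩ ⟨E', h, rfl⟩

/-- approximation guarantee of the merged solution over `Q`.  With linear
level costs `g(i) = i`, `MIN_i = OPT_t(G, T i)` with `Σ_i MIN_i > 0`, `Q = {i₁ = 1 < … < i_m}`,
`succQ` the successor function in `Q` (with value `ℓ+1` at the top), `H a` minimum-weight
subsetwise `t`-spanners over `T a`, and merged solution `Ee i = ⋃_{a ∈ Q, a ≥ max{b ∈ Q : b ≤ i}} H a`,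
the cost of `Ee` is at most `(Σ_{a ∈ Q}(succQ a − 1)·MIN_a / Σ_{i=1}^ℓ MIN_i) · OPT_ML`. -/
theorem stmt12 {V : Type*} [Fintype V] [DecidableEq V] (G : SimpleGraph V) (w : Sym2 V → ℝ)
    (hG : G.Connected) (hw : ∀ e ∈ G.edgeSet, 0 < w e)
    (ℓ : ℕ) (hℓ : 1 ≤ ℓ) (T : ℕ → Finset V)
    (hT : ∀ i ∈ Finset.Icc 1 ℓ, ∀ j ∈ Finset.Icc 1 ℓ, i ≤ j → T j ⊆ T i)
    (t : ℝ) (ht : 1 ≤ t)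
    (hpos : 0 < ∑ i ∈ Finset.Icc 1 ℓ, optT G w t ↑(T i))
    (Q : Finset ℕ) (hQsub : Q ⊆ Finset.Icc 1 ℓ) (hQ1 : 1 ∈ Q)
    (succQ : ℕ → ℕ)
    (hsucc : ∀ a ∈ Q, a < succQ a ∧ succQ a ≤ ℓ + 1 ∧
      (∀ b ∈ Q, a < b → succQ a ≤ b) ∧ (succQ a = ℓ + 1 ∨ succQ a ∈ Q))
    (H : ℕ → Finset (Sym2 V))
    (hH : ∀ a ∈ Q, IsSpannerMul G w ↑(T a) t (H a) ∧
      setWeight w (H a) = optT G w t ↑(T a))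
    (Ee : ℕ → Finset (Sym2 V))
    (hEe : ∀ i ∈ Finset.Icc 1 ℓ, Ee i =
      (Q.filter (fun a => (Q.filter (fun b => b ≤ i)).sup id ≤ a)).biUnion H) :
    mlCost w (fun n => (n : ℝ)) ℓ Ee ≤
      ((∑ a ∈ Q, ((succQ a : ℝ) - 1) * optT G w t ↑(T a)) /
        (∑ i ∈ Finset.Icc 1 ℓ, optT G w t ↑(T i))) *
        optML G w t (fun n => (n : ℝ)) ℓ T := by
  classical
  have hIcc1 : (1:ℕ) ∈ Finset.Icc 1 ℓ := by simp [hℓ]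
  set MIN : ℕ → ℝ := fun i => optT G w t ↑(T i) with hMIN
  set S : ℝ := ∑ i ∈ Finset.Icc 1 ℓ, MIN i with hS
  set A : ℝ := ∑ a ∈ Q, ((succQ a : ℝ) - 1) * MIN a with hA
  have hMINnn : ∀ i, 0 ≤ MIN i := fun i => optT_nonneg G w hw t _
  have hQmem : ∀ a ∈ Q, 1 ≤ a ∧ a ≤ ℓ := fun a ha => Finset.mem_Icc.mp (hQsub ha)
  have hHsub : ∀ a ∈ Q, ∀ e ∈ H a, e ∈ G.edgeSet := fun a ha e he => (hH a ha).1.1 he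
  have hsucc2 : ∀ a ∈ Q, 2 ≤ succQ a := by
    intro a ha
    have := (hsucc a ha).1
    have := (hQmem a ha).1
    omega
  -- A is nonneg
  have hAnn : 0 ≤ A := by
    apply Finset.sum_nonneg
    intro a ha
    have h2 : (2:ℝ) ≤ (succQ a : ℝ) := by exact_mod_cast hsucc2 a ha
    have : (0:ℝ) ≤ (succQ a : ℝ) - 1 := by linarith
    exact mul_nonneg this (hMINnn a)
  -- Step A: mlCost Ee ≤ A
  have hEe1 : Ee 1 = Q.biUnion H := by
    rw [hEe 1 hIcc1]
    have hm : (Q.filter (fun b => b ≤ 1)).sup id = 1 := by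
      apply le_antisymm
      · exact Finset.sup_le (fun b hb => (Finset.mem_filter.mp hb).2)
      · exact Finset.le_sup (f := id) (Finset.mem_filter.mpr ⟨hQ1, le_refl 1⟩)
    rw [hm]
    congr 1
    apply Finset.filter_true_of_mem
    intro a ha
    exact (hQmem a ha).1
  set phi : Sym2 V → ℕ := fun e => (Q.filter (fun a => e ∈ H a)).sup id with hphi
  have hphimem : ∀ e ∈ Q.biUnion H, phi e ∈ Q ∧ e ∈ H (phi e) := by
    intro e he
    obtain ⟨a, ha, hea⟩ := Finset.mem_biUnion.mp he
    have hne : (Q.filter (fun a => e ∈ H a)).Nonempty :=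
      ⟨a, Finset.mem_filter.mpr ⟨ha, hea⟩⟩
    obtain ⟨b, hb, hsup⟩ := Finset.exists_mem_eq_sup _ hne id
    have hpb : phi e = b := hsup
    rw [hpb]
    exact ⟨(Finset.mem_filter.mp hb).1, (Finset.mem_filter.mp hb).2⟩
  have hphimax : ∀ e, ∀ a ∈ Q, e ∈ H a → a ≤ phi e := fun e a ha hea =>
    Finset.le_sup (f := id) (Finset.mem_filter.mpr ⟨ha, hea⟩)
  have hybound : ∀ e ∈ Q.biUnion H,
      ((Finset.Icc 1 ℓ).filter (fun i => e ∈ Ee i)).sup id ≤ succQ (phi e) - 1 := by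
    intro e he
    apply Finset.sup_le
    intro i hi
    obtain ⟨hiI, hiE⟩ := Finset.mem_filter.mp hi
    obtain ⟨hi1, hil⟩ := Finset.mem_Icc.mp hiI
    have hlt : i < succQ (phi e) := by
      by_contra hcon
      push_neg at hcon
      rw [hEe i hiI] at hiE
      obtain ⟨a, ha, hea⟩ := Finset.mem_biUnion.mp hiE
      obtain ⟨haQ, hma⟩ := Finset.mem_filter.mp ha
      have haphi : a ≤ phi e := hphimax e a haQ hea
      obtain ⟨h1, h2, h3, h4⟩ := hsucc (phi e) (hphimem e he).1
      rcases h4 with h4 | h4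
      · omega
      · have : succQ (phi e) ≤ (Q.filter (fun b => b ≤ i)).sup id :=
          Finset.le_sup (f := id) (Finset.mem_filter.mpr ⟨h4, hcon⟩)
        omega
    simp only [id_eq]
    omega
  have hstepA : mlCost w (fun n => (n : ℝ)) ℓ Ee ≤ A := by
    unfold mlCost
    have h1 : ∑ e ∈ Ee 1,
        ((((Finset.Icc 1 ℓ).filter (fun i => e ∈ Ee i)).sup id : ℕ) : ℝ) * w e ≤
        ∑ e ∈ Ee 1, (((succQ (phi e) : ℝ)) - 1) * w e := by
      apply Finset.sum_le_sum
      intro e he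
      have heB : e ∈ Q.biUnion H := hEe1 ▸ he
      have hwnn : 0 ≤ w e := (hw e (hHsub _ (hphimem e heB).1 e (hphimem e heB).2)).le
      apply mul_le_mul_of_nonneg_right _ hwnn
      have hy := hybound e heB
      have h2 : 2 ≤ succQ (phi e) := hsucc2 _ (hphimem e heB).1
      have : (((succQ (phi e) - 1 : ℕ)) : ℝ) = (succQ (phi e) : ℝ) - 1 := by
        rw [Nat.cast_sub (by omega)]; norm_num
      rw [← this]
      exact_mod_cast hy
    refine h1.trans ?_
    rw [hEe1]
    rw [← Finset.sum_fiberwise_of_maps_to (g := phi) (t := Q)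
      (fun e he => (hphimem e he).1)]
    rw [hA]
    apply Finset.sum_le_sum
    intro a ha
    have hsum : ∑ e ∈ (Q.biUnion H).filter (fun e => phi e = a),
        ((succQ (phi e) : ℝ) - 1) * w e =
        ∑ e ∈ (Q.biUnion H).filter (fun e => phi e = a),
        ((succQ a : ℝ) - 1) * w e := by
      apply Finset.sum_congr rfl
      intro e he
      rw [(Finset.mem_filter.mp he).2]
    rw [hsum, ← Finset.mul_sum]
    have hsw : MIN a = setWeight w (H a) := ((hH a ha).2).symm
    rw [hsw]
    have h2 : (2:ℝ) ≤ (succQ a : ℝ) := by exact_mod_cast hsucc2 a ha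
    apply mul_le_mul_of_nonneg_left _ (by linarith)
    unfold setWeight
    apply Finset.sum_le_sum_of_subset_of_nonneg
    · intro e he
      obtain ⟨heB, hpe⟩ := Finset.mem_filter.mp he
      exact hpe ▸ (hphimem e heB).2
    · intro e he _
      exact (hw e (hHsub a ha e he)).le
  -- Step B: S ≤ optML
  have hSopt : S ≤ optML G w t (fun n => (n : ℝ)) ℓ T := by
    apply le_csInf
    · -- nonempty: the constant family H 1
      refine ⟨mlCost w (fun n => (n : ℝ)) ℓ (fun _ => H 1), (fun _ => H 1), ⟨?_, ?_⟩, rfl⟩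
      · intro i hi
        obtain ⟨hsp, hle⟩ := (hH 1 hQ1)
        have hTsub : (T i : Set V) ⊆ (T 1 : Set V) := by
          exact_mod_cast hT 1 hIcc1 i hi (Finset.mem_Icc.mp hi).1
        exact ⟨hsp.1, fun u hu v hv => hsp.2 u (hTsub hu) v (hTsub hv)⟩
      · intro i _ j _ _
        exact subset_refl _
    · rintro c ⟨F, ⟨hFsp, hFnest⟩, rfl⟩
      have hF1sub : ∀ e ∈ F 1, e ∈ G.edgeSet := fun e he => (hFsp 1 hIcc1).1 he
      have key : S ≤ ∑ i ∈ Finset.Icc 1 ℓ, setWeight w (F i) := by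
        apply Finset.sum_le_sum
        intro i hi
        exact optT_le_setWeight G w hw t _ _ (hFsp i hi)
      refine key.trans ?_
      have heq : ∑ i ∈ Finset.Icc 1 ℓ, setWeight w (F i) =
          ∑ e ∈ F 1, ((((Finset.Icc 1 ℓ).filter (fun i => e ∈ F i)).card : ℕ) : ℝ) * w e := by
        unfold setWeight
        have h1 : ∀ i ∈ Finset.Icc 1 ℓ, ∑ e ∈ F i, w e =
            ∑ e ∈ F 1, if e ∈ F i then w e else 0 := by
          intro i hi
          rw [← Finset.sum_filter]
          congr 1
          apply Finset.Subset.antisymm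
          · intro e he
            exact Finset.mem_filter.mpr
              ⟨hFnest 1 hIcc1 i hi (Finset.mem_Icc.mp hi).1 he, he⟩
          · exact fun e he => (Finset.mem_filter.mp he).2
        rw [Finset.sum_congr rfl h1, Finset.sum_comm]
        apply Finset.sum_congr rfl
        intro e _
        rw [← Finset.sum_filter, Finset.sum_const, nsmul_eq_mul]
      rw [heq]
      unfold mlCost
      apply Finset.sum_le_sum
      intro e he
      apply mul_le_mul_of_nonneg_right _ (hw e (hF1sub e he)).le
      have hcard : ((Finset.Icc 1 ℓ).filter (fun i => e ∈ F i)).card ≤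
          ((Finset.Icc 1 ℓ).filter (fun i => e ∈ F i)).sup id := by
        have hsubI : (Finset.Icc 1 ℓ).filter (fun i => e ∈ F i) ⊆
            Finset.Icc 1 (((Finset.Icc 1 ℓ).filter (fun i => e ∈ F i)).sup id) := by
          intro i hi
          refine Finset.mem_Icc.mpr ⟨(Finset.mem_Icc.mp (Finset.mem_filter.mp hi).1).1, ?_⟩
          exact Finset.le_sup (f := id) hi
        calc ((Finset.Icc 1 ℓ).filter (fun i => e ∈ F i)).card
            ≤ (Finset.Icc 1 (((Finset.Icc 1 ℓ).filter (fun i => e ∈ F i)).sup id)).card :=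
              Finset.card_le_card hsubI
          _ = ((Finset.Icc 1 ℓ).filter (fun i => e ∈ F i)).sup id := by
              rw [Nat.card_Icc]; omega
      exact Nat.cast_le.mpr hcard
  -- combine
  have hSpos : 0 < S := hpos
  calc mlCost w (fun n => (n : ℝ)) ℓ Ee ≤ A := hstepA
    _ = (A / S) * S := by field_simp
    _ ≤ (A / S) * optML G w t (fun n => (n : ℝ)) ℓ T :=
        mul_le_mul_of_nonneg_left hSopt (div_nonneg hAnn hSpos.le)
end

section
/- Let G = (V, E) be a finite, undirected, connected simple graph with positive edge weights w, fix a linear order < on V, let P be a set of unordered pairs of vertices, and let f be a distortion function. Let Ē be the set of directed edges obtained by replacing each e = {i, j} ∈ E by (i, j) and (j, i), each of weight w(e). Call an assignment of values x_e ∈ {0,1} for e ∈ E and x^{uv}_{(i,j)} ∈ {0,1} for (i, j) ∈ Ē and pairs (u, v) ∈ P with u < v feasible if for every (u, v) ∈ P with u < v: (1) Σ_{(i,j) ∈ Ē} x^{uv}_{(i,j)}·w({i,j}) ≤ f(d_G(u, v)); (2) for every vertex i, the net outflow Σ_{(i,j) ∈ Ē} x^{uv}_{(i,j)} − Σ_{(j,i)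 ∈ Ē} x^{uv}_{(j,i)} equals 1 if i = u, −1 if i = v, and 0 otherwise; (3) for every vertex i, Σ_{(i,j) ∈ Ē} x^{uv}_{(i,j)} ≤ 1; and (4) for every edge e = {i, j} ∈ E, x^{uv}_{(i,j)} + x^{uv}_{(j,i)} ≤ x_e. Then the minimum of Σ_{e ∈ E} w(e)·x_e over all feasible assignments equals the minimum of W(E') over all edge sets E' ⊆ E satisfying d_{E'}(u, v) ≤ f(d_G(u, v)) for all (u, v) ∈ P. -/
/-
A feasible 0/1 solution `(x, y)` yields the spanner `{e | x e = 1}`: for each pair `(u, v)` the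
arcs carrying flow are balanced everywhere except at `u` (one more arc out) and `v` (one more
arc in), so they contain a `u`–`v` walk; shortcutting it to a path gives a walk inside the
spanner whose length is at most the flow length (1), because weights are nonnegative.
Conversely, given a spanner, shortcut each required walk to a path and send one unit of flow
along its arcs: on a path every vertex has out-degree at most one and no edge is traversed in
both directions, so (1)–(4) hold with `x` the indicator of the spanner, of cost `W(E')`.
Hence both minima are taken over the same set of values.
-/

open SimpleGraph Finset

variable {V : Type*}

lemma List.card_filter_toFinset_eq_count_map {α β : Type*} [DecidableEq α] [DecidableEq β]
    {l : List α} (hl : l.Nodup) (g : α → β) (b : β) :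
    #{a ∈ l.toFinset | g a = b} = (l.map g).count b := by
  rw [List.count_eq_countP, List.countP_map, List.countP_eq_length_filter,
    ← List.toFinset_card_of_nodup (hl.filter _), List.toFinset_filter]
  simp

lemma Finset.sum_mul_eq_sum_filter_of_eq_zero_or_eq_one {ι : Type*} (s : Finset ι) {y : ι → ℝ}
    (hy : ∀ a ∈ s, y a = 0 ∨ y a = 1) (g : ι → ℝ) :
    ∑ a ∈ s, y a * g a = ∑ a ∈ s with y a = 1, g a := by
  rw [sum_filter]
  refine sum_congr rfl fun a ha => ?_
  rcases hy a ha with h | h <;> simp [h]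

lemma walkWeight_bypass_le [DecidableEq V] {G : SimpleGraph V} {w : Sym2 V → ℝ}
    (hw : ∀ e ∈ G.edgeSet, 0 ≤ w e) {u v : V} (p : G.Walk u v) :
    walkWeight w p.bypass ≤ walkWeight w p := by
  obtain ⟨l, hperm, hsub⟩ :=
    p.bypass_isPath.isTrail.edges_nodup.subperm p.edges_bypass_subset_edges
  rw [walkWeight, walkWeight, ← (hperm.map w).sum_eq]
  refine (hsub.map w).sum_le_sum fun a ha => ?_
  obtain ⟨e, he, rfl⟩ := List.mem_map.1 ha
  exact hw e (p.edges_subset_edgeSet he)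

section ArcSets

variable [DecidableEq V]

def outDeg (A : Finset (V × V)) (i : V) : ℕ := #{a ∈ A | a.1 = i}

def inDeg (A : Finset (V × V)) (i : V) : ℕ := #{a ∈ A | a.2 = i}

lemma outDeg_erase_add {A : Finset (V × V)} {a : V × V} (ha : a ∈ A) (i : V) :
    outDeg (A.erase a) i + (if i = a.1 then 1 else 0) = outDeg A i := by
  unfold outDeg
  rw [filter_erase]
  split_ifs with h
  · exact card_erase_add_one (mem_filter.2 ⟨ha, h.symm⟩)
  · rw [erase_eq_of_notMem (by simp [Ne.symm h]), add_zero]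

lemma inDeg_erase_add {A : Finset (V × V)} {a : V × V} (ha : a ∈ A) (i : V) :
    inDeg (A.erase a) i + (if i = a.2 then 1 else 0) = inDeg A i := by
  unfold inDeg
  rw [filter_erase]
  split_ifs with h
  · exact card_erase_add_one (mem_filter.2 ⟨ha, h.symm⟩)
  · rw [erase_eq_of_notMem (by simp [Ne.symm h]), add_zero]

theorem exists_walk_of_outDeg_sub_inDeg {G : SimpleGraph V} (A : Finset (V × V))
    (hA : ∀ a ∈ A, G.Adj a.1 a.2) {u v : V}
    (hbal : ∀ i, (outDeg A i : ℤ) - inDeg A i = (if i = u then 1 else 0) - if i = v then 1 else 0) :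
    ∃ p : G.Walk u v, ∀ d ∈ p.darts, d.toProd ∈ A := by
  induction A using Finset.strongInduction generalizing u with
  | H A ih =>
  by_cases huv : u = v
  · subst huv
    exact ⟨.nil, by simp⟩
  -- Follow an arc out of `u` and recurse on the remaining arcs, now balanced from its head.
  obtain ⟨⟨u', j⟩, hujA, rfl⟩ : ∃ a ∈ A, a.1 = u := by
    have hpos : 0 < outDeg A u := by
      have := hbal u
      simp only [if_true, if_neg huv] at this
      omega
    exact filter_nonempty_iff.1 (card_pos.1 hpos)
  obtain ⟨q, hq⟩ := ih (A.erase (u', j)) (erase_ssubset hujA)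
    (fun a ha => hA a (mem_of_mem_erase ha)) (u := j) fun i => by
      have h₁ := outDeg_erase_add hujA i
      have h₂ := inDeg_erase_add hujA i
      have h₃ := hbal i
      split_ifs at h₁ h₂ h₃ ⊢ <;> omega
  exact ⟨.cons (hA _ hujA) q, by
    simpa [or_imp, forall_and] using ⟨hujA, fun d hd => mem_of_mem_erase (hq d hd)⟩⟩

end ArcSets

namespace SimpleGraph.Walk

variable {G : SimpleGraph V} {u v : V}

lemma IsTrail.nodup_map_toProd_darts {p : G.Walk u v} (hp : p.IsTrail) :
    (p.darts.map Dart.toProd).Nodup :=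
  (hp.edges_nodup.of_map _).map Dart.toProd_injective

variable [DecidableEq V]

def arcs (p : G.Walk u v) : Finset (V × V) := (p.darts.map Dart.toProd).toFinset

lemma mem_arcs {p : G.Walk u v} {a : V × V} : a ∈ p.arcs ↔ ∃ d ∈ p.darts, d.toProd = a := by
  simp [arcs]

lemma adj_of_mem_arcs {p : G.Walk u v} {a : V × V} (ha : a ∈ p.arcs) : G.Adj a.1 a.2 := by
  obtain ⟨d, -, rfl⟩ := mem_arcs.1 ha
  exact d.adj

lemma arcs_bypass_subset (p : G.Walk u v) : p.bypass.arcs ⊆ p.arcs := fun _ ha => by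
  obtain ⟨d, hd, rfl⟩ := mem_arcs.1 ha
  exact mem_arcs.2 ⟨d, p.darts_bypass_subset_darts hd, rfl⟩

lemma IsTrail.walkWeight_eq_sum_arcs {p : G.Walk u v} (hp : p.IsTrail) (w : Sym2 V → ℝ) :
    walkWeight w p = ∑ a ∈ p.arcs, w s(a.1, a.2) := by
  rw [arcs, List.sum_toFinset _ hp.nodup_map_toProd_darts, walkWeight, edges, List.map_map,
    List.map_map]
  rfl

lemma IsTrail.outDeg_arcs {p : G.Walk u v} (hp : p.IsTrail) (i : V) :
    outDeg p.arcs i = p.support.dropLast.count i := by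
  rw [outDeg, arcs, List.card_filter_toFinset_eq_count_map hp.nodup_map_toProd_darts,
    ← p.map_fst_darts, List.map_map]
  rfl

lemma IsTrail.inDeg_arcs {p : G.Walk u v} (hp : p.IsTrail) (i : V) :
    inDeg p.arcs i = p.support.tail.count i := by
  rw [inDeg, arcs, List.card_filter_toFinset_eq_count_map hp.nodup_map_toProd_darts,
    ← p.map_snd_darts, List.map_map]
  rfl

/-- `support = dropLast ++ [v] = u :: tail`, so the two sublists differ only at the ends. -/
lemma count_dropLast_support_sub_count_tail_support (p : G.Walk u v) (i : V) :
    (p.support.dropLast.count i : ℤ) - p.support.tail.count i =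
      (if i = u then 1 else 0) - if i = v then 1 else 0 := by
  have h := congrArg (List.count i) (p.dropLast_support_concat.trans p.cons_tail_support.symm)
  simp only [List.count_append, List.count_cons, List.count_nil, beq_iff_eq] at h
  grind

lemma IsPath.outDeg_arcs_le_one {p : G.Walk u v} (hp : p.IsPath) (i : V) :
    outDeg p.arcs i ≤ 1 := by
  rw [hp.isTrail.outDeg_arcs]
  exact List.nodup_iff_count_le_one.1 (hp.support_nodup.sublist (List.dropLast_sublist _)) i

lemma IsTrail.swap_notMem_arcs {p : G.Walk u v} (hp : p.IsTrail) {a : V × V}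
    (ha : a ∈ p.arcs) : a.swap ∉ p.arcs := by
  intro ha'
  obtain ⟨d, hd, rfl⟩ := mem_arcs.1 ha
  obtain ⟨d', hd', hdd'⟩ := mem_arcs.1 ha'
  have : d' = d := List.inj_on_of_nodup_map hp.edges_nodup hd' hd (by
    rw [Dart.edge, Dart.edge, hdd']
    exact Sym2.eq_swap)
  subst this
  exact d'.adj.ne (Prod.ext_iff.1 hdd').1

end SimpleGraph.Walk

section FlowFormulation

variable [Fintype V] (G : SimpleGraph V) [DecidableRel G.Adj] (w : Sym2 V → ℝ)

noncomputable def flowArcs (z : V → V → ℝ) : Finset (V × V) := {a | G.Adj a.1 a.2 ∧ z a.1 a.2 = 1}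

variable {G w} in
lemma sum_mul_weight_eq_sum_flowArcs {z : V → V → ℝ} (hz : ∀ i j, z i j = 0 ∨ z i j = 1) :
    ∑ p ∈ univ.filter (fun p : V × V => G.Adj p.1 p.2), z p.1 p.2 * w s(p.1, p.2) =
      ∑ a ∈ flowArcs G z, w s(a.1, a.2) := by
  rw [sum_mul_eq_sum_filter_of_eq_zero_or_eq_one _ (fun a _ => hz a.1 a.2), filter_filter]
  rfl

variable [DecidableEq V]

/-- Constraints (1)–(4) for the pair `(u, v)`, with `z i j` the flow on the arc `(i, j)` and
the budget `L` in place of `f (d_G(u, v))`. -/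
def IsFeasibleFlow (L : ℝ) (x : Sym2 V → ℝ) (u v : V) (z : V → V → ℝ) : Prop :=
  ((∑ p ∈ Finset.univ.filter (fun p : V × V => G.Adj p.1 p.2), z p.1 p.2 * w s(p.1, p.2)) ≤ L) ∧
  (∀ i : V,
    (∑ j ∈ Finset.univ.filter (fun j => G.Adj i j), z i j) -
    (∑ j ∈ Finset.univ.filter (fun j => G.Adj j i), z j i) =
      if i = u then 1 else if i = v then -1 else 0) ∧
  (∀ i : V, (∑ j ∈ Finset.univ.filter (fun j => G.Adj i j), z i j) ≤ 1) ∧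
  (∀ i j : V, G.Adj i j → z i j + z j i ≤ x s(i, j))

variable {G w}

lemma sum_out_eq_outDeg_flowArcs {z : V → V → ℝ} (hz : ∀ i j, z i j = 0 ∨ z i j = 1) (i : V) :
    ∑ j ∈ univ.filter (fun j => G.Adj i j), z i j = outDeg (flowArcs G z) i := by
  calc ∑ j ∈ univ.filter (fun j => G.Adj i j), z i j
      = #{j ∈ univ.filter (fun j => G.Adj i j) | z i j = 1} := by
        simpa using sum_mul_eq_sum_filter_of_eq_zero_or_eq_one _ (fun j _ => hz i j) 1
    _ = outDeg (flowArcs G z) i := by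
        rw [outDeg]
        congr 1
        refine card_nbij' (fun j => (i, j)) Prod.snd ?_ ?_ ?_ ?_ <;> intro a <;>
          aesop (add simp flowArcs)

lemma sum_in_eq_inDeg_flowArcs {z : V → V → ℝ} (hz : ∀ i j, z i j = 0 ∨ z i j = 1) (i : V) :
    ∑ j ∈ univ.filter (fun j => G.Adj j i), z j i = inDeg (flowArcs G z) i := by
  calc ∑ j ∈ univ.filter (fun j => G.Adj j i), z j i
      = #{j ∈ univ.filter (fun j => G.Adj j i) | z j i = 1} := by
        simpa using sum_mul_eq_sum_filter_of_eq_zero_or_eq_one _ (fun j _ => hz j i) 1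
    _ = inDeg (flowArcs G z) i := by
        rw [inDeg]
        congr 1
        refine card_nbij' (fun j => (j, i)) Prod.fst ?_ ?_ ?_ ?_ <;> intro a <;>
          aesop (add simp flowArcs)

theorem IsFeasibleFlow.exists_walk (hw : ∀ e ∈ G.edgeSet, 0 ≤ w e) {L : ℝ}
    {x : Sym2 V → ℝ} {u v : V} (huv : u ≠ v) {z : V → V → ℝ}
    (hz : ∀ i j, z i j = 0 ∨ z i j = 1) (h : IsFeasibleFlow G w L x u v z) :
    ∃ p : G.Walk u v, (∀ e ∈ p.edges, 1 ≤ x e) ∧ walkWeight w p ≤ L := by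
  obtain ⟨hlen, hbal, -, hcap⟩ := h
  have hA : ∀ a ∈ flowArcs G z, G.Adj a.1 a.2 ∧ z a.1 a.2 = 1 := fun a ha => by
    simpa [flowArcs] using ha
  obtain ⟨p, hp⟩ := exists_walk_of_outDeg_sub_inDeg (flowArcs G z) (fun a ha => (hA a ha).1)
    (u := u) (v := v) fun i => by
      have := hbal i
      rw [sum_out_eq_outDeg_flowArcs hz, sum_in_eq_inDeg_flowArcs hz] at this
      split_ifs at this ⊢ with hu hv <;> first | exact_mod_cast this | exact absurd (hu ▸ hv) huv
  have hsub : p.bypass.arcs ⊆ flowArcs G z := fun a ha => by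
    obtain ⟨d, hd, rfl⟩ := Walk.mem_arcs.1 (p.arcs_bypass_subset ha)
    exact hp d hd
  refine ⟨p.bypass, fun e he => ?_, ?_⟩
  · obtain ⟨d, hd, rfl⟩ := List.mem_map.1 he
    obtain ⟨hadj, hz1⟩ := hA _ (hsub (Walk.mem_arcs.2 ⟨d, hd, rfl⟩))
    have := hcap _ _ hadj
    change 1 ≤ x s(d.fst, d.snd)
    rcases hz d.snd d.fst with h | h <;> rw [h] at this <;> linarith
  · calc walkWeight w p.bypass = ∑ a ∈ p.bypass.arcs, w s(a.1, a.2) :=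
          p.bypass_isPath.isTrail.walkWeight_eq_sum_arcs w
      _ ≤ ∑ a ∈ flowArcs G z, w s(a.1, a.2) :=
          sum_le_sum_of_subset_of_nonneg hsub fun a ha _ => hw _ (hA a ha).1
      _ ≤ L := (sum_mul_weight_eq_sum_flowArcs hz).symm.trans_le hlen

lemma flowArcs_indicator_arcs {u v : V} (p : G.Walk u v) :
    flowArcs G (fun i j => if (i, j) ∈ p.arcs then 1 else 0) = p.arcs := by
  ext a
  simpa [flowArcs] using fun ha => Walk.adj_of_mem_arcs ha

theorem SimpleGraph.Walk.IsPath.isFeasibleFlow_indicator_arcs {u v : V} {p : G.Walk u v}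
    (hp : p.IsPath) (huv : u ≠ v) {L : ℝ} (hL : walkWeight w p ≤ L) {x : Sym2 V → ℝ}
    (hx₀ : ∀ e ∈ G.edgeSet, 0 ≤ x e) (hx : ∀ e ∈ p.edges, 1 ≤ x e) :
    IsFeasibleFlow G w L x u v (fun i j => if (i, j) ∈ p.arcs then 1 else 0) := by
  have hz : ∀ i j, (if (i, j) ∈ p.arcs then 1 else 0 : ℝ) = 0 ∨
      (if (i, j) ∈ p.arcs then 1 else 0 : ℝ) = 1 := fun i j => by
    split_ifs <;> simp
  simp only [IsFeasibleFlow, sum_mul_weight_eq_sum_flowArcs hz, sum_out_eq_outDeg_flowArcs hz,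
    sum_in_eq_inDeg_flowArcs hz, flowArcs_indicator_arcs]
  refine ⟨?_, fun i => ?_, fun i => mod_cast hp.outDeg_arcs_le_one i, fun i j hij => ?_⟩
  · rwa [← hp.isTrail.walkWeight_eq_sum_arcs]
  · have := p.count_dropLast_support_sub_count_tail_support i
    rw [← hp.isTrail.outDeg_arcs, ← hp.isTrail.inDeg_arcs] at this
    split_ifs at this ⊢ with hu hv <;> first | exact_mod_cast this | exact absurd (hu ▸ hv) huv
  · have hedge : ∀ a ∈ p.arcs, 1 ≤ x s(a.1, a.2) := fun a ha => by
      obtain ⟨d, hd, rfl⟩ := Walk.mem_arcs.1 ha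
      exact hx _ (List.mem_map_of_mem hd)
    by_cases hija : (i, j) ∈ p.arcs
    · have hjia : (j, i) ∉ p.arcs := hp.isTrail.swap_notMem_arcs hija
      simpa [hija, hjia] using hedge _ hija
    · by_cases hjia : (j, i) ∈ p.arcs
      · simpa [hija, hjia, Sym2.eq_swap] using hedge _ hjia
      · simpa [hija, hjia] using hx₀ s(i, j) hij

end FlowFormulation

lemma setWeight_filter_eq_sum_mul {w x : Sym2 V → ℝ} {s : Finset (Sym2 V)}
    (hx : ∀ e ∈ s, x e = 0 ∨ x e = 1) : setWeight w {e ∈ s | x e = 1} = ∑ e ∈ s, w e * x e := by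
  simp only [setWeight, mul_comm (w _), sum_mul_eq_sum_filter_of_eq_zero_or_eq_one s hx]

lemma sum_mul_indicator_eq_setWeight [DecidableEq V] {w : Sym2 V → ℝ} {s E' : Finset (Sym2 V)}
    (hE' : E' ⊆ s) : ∑ e ∈ s, w e * (if e ∈ E' then 1 else 0) = setWeight w E' := by
  simp only [mul_ite, mul_one, mul_zero, sum_ite_mem, inter_eq_right.2 hE', setWeight]

section Spanner

variable [Fintype V] [DecidableEq V] [LinearOrder V] {G : SimpleGraph V} [DecidableRel G.Adj]
  {w : Sym2 V → ℝ} {P : Finset (Sym2 V)} {L : V → V → ℝ}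

theorem exists_walks_of_isFeasibleFlow (hw : ∀ e ∈ G.edgeSet, 0 ≤ w e) {x : Sym2 V → ℝ}
    (hx : ∀ e ∈ G.edgeFinset, x e = 0 ∨ x e = 1) {y : V → V → V → V → ℝ}
    (hy : ∀ u v i j, y u v i j = 0 ∨ y u v i j = 1)
    (hfeas : ∀ u v, u < v → s(u, v) ∈ P → IsFeasibleFlow G w (L u v) x u v (y u v)) :
    ∀ u v, u < v → s(u, v) ∈ P → ∃ p : G.Walk u v,
      (∀ e ∈ p.edges, e ∈ {e ∈ G.edgeFinset | x e = 1}) ∧ walkWeight w p ≤ L u v := by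
  intro u v huv huvP
  obtain ⟨p, hpx, hpL⟩ := (hfeas u v huv huvP).exists_walk hw huv.ne (hy u v)
  refine ⟨p, fun e he => ?_, hpL⟩
  have heG := mem_edgeFinset.2 (p.edges_subset_edgeSet he)
  exact mem_filter.2 ⟨heG, (hx e heG).resolve_left fun h => by linarith [hpx e he]⟩

theorem exists_isFeasibleFlow_of_walks (hw : ∀ e ∈ G.edgeSet, 0 ≤ w e) {E' : Finset (Sym2 V)}
    (hwalks : ∀ u v, u < v → s(u, v) ∈ P →
      ∃ p : G.Walk u v, (∀ e ∈ p.edges, e ∈ E') ∧ walkWeight w p ≤ L u v) :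
    ∃ y : V → V → V → V → ℝ, (∀ u v i j, y u v i j = 0 ∨ y u v i j = 1) ∧
      ∀ u v, u < v → s(u, v) ∈ P →
        IsFeasibleFlow G w (L u v) (fun e => if e ∈ E' then 1 else 0) u v (y u v) := by
  choose p hpE' hpL using hwalks
  refine ⟨fun u v i j => if h : u < v ∧ s(u, v) ∈ P then
    (if (i, j) ∈ (p u v h.1 h.2).bypass.arcs then 1 else 0) else 0,
    fun u v i j => by dsimp only; split_ifs <;> simp, fun u v huv huvP => ?_⟩
  simp only [dif_pos (And.intro huv huvP)]
  refine (p u v huv huvP).bypass_isPath.isFeasibleFlow_indicator_arcs huv.ne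
    ((walkWeight_bypass_le hw _).trans (hpL u v huv huvP)) (fun e _ => by split_ifs <;> simp)
    fun e he => ?_
  simp [hpE' u v huv huvP e ((p u v huv huvP).edges_bypass_subset_edges he)]

end Spanner

theorem stmt14_general {V : Type*} [Fintype V] [DecidableEq V] [LinearOrder V]
    (G : SimpleGraph V) [DecidableRel G.Adj] (w : Sym2 V → ℝ)
    (hw : ∀ e ∈ G.edgeSet, 0 < w e)
    (P : Finset (Sym2 V))
    (f : ℝ → ℝ) :
    sInf {c : ℝ | ∃ (x : Sym2 V → ℝ) (y : V → V → V → V → ℝ),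
      (∀ e ∈ G.edgeFinset, x e = 0 ∨ x e = 1) ∧
      (∀ u v i j : V, y u v i j = 0 ∨ y u v i j = 1) ∧
      (∀ u v : V, u < v → s(u, v) ∈ P →
        ((∑ p ∈ Finset.univ.filter (fun p : V × V => G.Adj p.1 p.2),
            y u v p.1 p.2 * w s(p.1, p.2)) ≤ f (graphDist G w u v)) ∧
        (∀ i : V,
          (∑ j ∈ Finset.univ.filter (fun j => G.Adj i j), y u v i j) -
          (∑ j ∈ Finset.univ.filter (fun j => G.Adj j i), y u v j i) =
            if i = u then 1 else if i = v then -1 else 0) ∧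
        (∀ i : V, (∑ j ∈ Finset.univ.filter (fun j => G.Adj i j), y u v i j) ≤ 1) ∧
        (∀ i j : V, G.Adj i j → y u v i j + y u v j i ≤ x s(i, j))) ∧
      (∑ e ∈ G.edgeFinset, w e * x e) = c} =
    sInf {c : ℝ | ∃ E' : Finset (Sym2 V), ↑E' ⊆ G.edgeSet ∧
      (∀ u v : V, u < v → s(u, v) ∈ P →
        ∃ p : G.Walk u v, (∀ e ∈ p.edges, e ∈ E') ∧
          walkWeight w p ≤ f (graphDist G w u v)) ∧
      setWeight w E' = c} := by
  have hw₀ : ∀ e ∈ G.edgeSet, 0 ≤ w e := fun e he => (hw e he).le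
  congr 1
  ext c
  constructor
  · rintro ⟨x, y, hx, hy, hfeas, rfl⟩
    exact ⟨_, fun e he => mem_edgeFinset.1 (mem_filter.1 he).1,
      exists_walks_of_isFeasibleFlow (L := fun u v => f (graphDist G w u v)) hw₀ hx hy hfeas,
      setWeight_filter_eq_sum_mul hx⟩
  · rintro ⟨E', hE', hwalks, rfl⟩
    obtain ⟨y, hy, hfeas⟩ :=
      exists_isFeasibleFlow_of_walks (L := fun u v => f (graphDist G w u v)) hw₀ hwalks
    exact ⟨fun e => if e ∈ E' then 1 else 0, y, fun e _ => by dsimp only; split_ifs <;> simp,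
      hy, hfeas,
      sum_mul_indicator_eq_setWeight fun e he => mem_edgeFinset.2 (hE' he)⟩

/-- The flow-based ILP for pairwise spanners is exact: the minimum of
`Σ_{e ∈ E} w(e)·x_e` over feasible binary assignments `(x, y)` (edge-selection variables `x_e`
and, for each pair `(u,v) ∈ P` with `u < v`, directed flow variables `y u v i j` on the
bidirected edges, subject to the length bound (1), flow conservation (2), out-degree bound (3),
and capacity coupling (4)) equals the minimum weight `W(E')` over edge sets `E' ⊆ E` with
`d_{E'}(u,v) ≤ f(d_G(u,v))` for all pairs in `P`. -/
theorem stmt14 {V : Type*} [Fintype V] [DecidableEq V] [LinearOrder V]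
    (G : SimpleGraph V) [DecidableRel G.Adj] (w : Sym2 V → ℝ)
    (hG : G.Connected) (hw : ∀ e ∈ G.edgeSet, 0 < w e)
    (P : Finset (Sym2 V)) (hP : ∀ e ∈ P, ¬ e.IsDiag)
    (f : ℝ → ℝ) (hf : IsDistortion f) :
    sInf {c : ℝ | ∃ (x : Sym2 V → ℝ) (y : V → V → V → V → ℝ),
      (∀ e ∈ G.edgeFinset, x e = 0 ∨ x e = 1) ∧
      (∀ u v i j : V, y u v i j = 0 ∨ y u v i j = 1) ∧
      (∀ u v : V, u < v → s(u, v) ∈ P →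
        ((∑ p ∈ Finset.univ.filter (fun p : V × V => G.Adj p.1 p.2),
            y u v p.1 p.2 * w s(p.1, p.2)) ≤ f (graphDist G w u v)) ∧
        (∀ i : V,
          (∑ j ∈ Finset.univ.filter (fun j => G.Adj i j), y u v i j) -
          (∑ j ∈ Finset.univ.filter (fun j => G.Adj j i), y u v j i) =
            if i = u then 1 else if i = v then -1 else 0) ∧
        (∀ i : V, (∑ j ∈ Finset.univ.filter (fun j => G.Adj i j), y u v i j) ≤ 1) ∧
        (∀ i j : V, G.Adj i j → y u v i j + y u v j i ≤ x s(i, j))) ∧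
      (∑ e ∈ G.edgeFinset, w e * x e) = c} =
    sInf {c : ℝ | ∃ E' : Finset (Sym2 V), ↑E' ⊆ G.edgeSet ∧
      (∀ u v : V, u < v → s(u, v) ∈ P →
        ∃ p : G.Walk u v, (∀ e ∈ p.edges, e ∈ E') ∧
          walkWeight w p ≤ f (graphDist G w u v)) ∧
      setWeight w E' = c} :=
  stmt14_general G w hw P f
end
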